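/- arXiv:1812.02543 — 2 statements merged into one kernel-verified Lean document; each statement's English description precedes it below -/
import Mathlib

section
/- Let (W,S) be a Coxeter system and let I ⊆ S. Define N_I := {n ∈ N_W(W_I) : ℓ(ns) > ℓ(n) for all s ∈ I}. Then N_I is a subgroup of W, the normaliser N_W(W_I) is the internal semidirect product of W_I and N_I (i.e. N_W(W_I) = W_I·N_I and W_I ∩ N_I = {1}, with W_I normal in N_W(W_I)), and moreover ℓ(w_I·n_I) = ℓ(w_I) + ℓ(n_I) for all w_I ∈ W_I and n_I ∈ N_I. -/
/-!
The argument runs through Tits's sign representation: `W` acts on `W × ZMod 2` by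
`s · (t, ε) = (s t s, ε + [t = s])`, and the parity `η(w, t)` that `w` adds to `(t, 0)` is `1`
exactly when the reflection `t` is a right inversion of `w`. With the cocycle rule
`η(u v, t) = η(v, t) + η(u, v t v⁻¹)` this gives the strong exchange condition, so reduced words
of elements of `W_I` only use letters from `I`.

If no reflection of `W_I` shortens `n` on the left (e.g. if `n` is shortest in `W_I n`), the
cocycle rule shows that `s_i`, `i ∈ I`, shortens `u n` iff it shortens `u`, whence
`ℓ(u n) = ℓ(u) + ℓ(n)` for `u ∈ W_I`. For `n` normalising `W_I` the cosets `W_I n` and `n W_I`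
agree, so the shortest element of each coset of `W_I` in `N_W(W_I)` lies in `N_I`. Length
additivity forces `n s_i n⁻¹ ∈ W_I` to have length one, so each `n ∈ N_I` permutes the simple
reflections of `W_I`, and the cocycle rule then makes `N_I` closed under products.
-/

open CoxeterSystem

variable {B W : Type*} [Group W] {M : CoxeterMatrix B}

/-- `w →ˢ w'`: one elementary conjugation by a simple reflection, not increasing length. -/
def ConjStep (cs : CoxeterSystem M W) (w w' : W) : Prop :=
  ∃ i : B, w' = cs.simple i * w * cs.simple i ∧ cs.length w' ≤ cs.length w

/-- `w → w'`: a finite chain of elementary conjugations. -/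
def ConjMove (cs : CoxeterSystem M W) : W → W → Prop :=
  Relation.ReflTransGen (ConjStep cs)

/-- `u` has minimal length in its conjugacy class. -/
def IsMinimalLength (cs : CoxeterSystem M W) (u : W) : Prop :=
  ∀ v : W, cs.length u ≤ cs.length (v⁻¹ * u * v)

/-- The standard parabolic subgroup `W_I`. -/
def StandardParabolic (cs : CoxeterSystem M W) (I : Set B) : Subgroup W :=
  Subgroup.closure (cs.simple '' I)

/-- `I` is spherical if `W_I` is finite. -/
def IsSpherical (cs : CoxeterSystem M W) (I : Set B) : Prop :=
  (StandardParabolic cs I : Set W).Finite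

/-- `w ≈ˣ w'`: elementarily strongly conjugate via `x`. -/
def ElemStrong (cs : CoxeterSystem M W) (x w w' : W) : Prop :=
  cs.length w = cs.length w' ∧ w' = x⁻¹ * w * x ∧
    (cs.length (x⁻¹ * w) = cs.length x + cs.length w ∨
     cs.length (w * x) = cs.length w + cs.length x)

/-- `w ∼ w'`: strongly conjugate. -/
def StrongConj (cs : CoxeterSystem M W) : W → W → Prop :=
  Relation.ReflTransGen (fun w w' => ∃ x : W, ElemStrong cs x w w')

/-- `w` and `w'` are elementarily tightly conjugate. -/
def ElemTight (cs : CoxeterSystem M W) (w w' : W) : Prop :=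
  cs.length w = cs.length w' ∧
    ((∃ i : B, w' = cs.simple i * w * cs.simple i) ∨
     (∃ I : Set B, IsSpherical cs I ∧ w ∈ Subgroup.normalizer (StandardParabolic cs I : Set W) ∧
       ∃ x ∈ StandardParabolic cs I, ElemStrong cs x w w'))

/-- `w ≈_t w'`: tightly conjugate. -/
def TightConj (cs : CoxeterSystem M W) : W → W → Prop :=
  Relation.ReflTransGen (ElemTight cs)

/-- `w` is elementarily related to `w'`: `w'` is a cyclic shift `s_k ⋯ s_d s_1 ⋯ s_{k-1}`
(`k ∈ {1, …, d}`) of some reduced decomposition `w = s_1 ⋯ s_d` of `w`. -/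
def ElemRelated (cs : CoxeterSystem M W) (w w' : W) : Prop :=
  ∃ ω : List B, cs.wordProd ω = w ∧ cs.IsReduced ω ∧
    ∃ k, 1 ≤ k ∧ k ≤ ω.length ∧ w' = cs.wordProd (ω.drop (k - 1) ++ ω.take (k - 1))

/-- `w ∼_κ w'`: related by a finite chain of cyclic shifts. -/
def KappaConj (cs : CoxeterSystem M W) : W → W → Prop :=
  Relation.ReflTransGen (ElemRelated cs)

/-- `w'` is a cyclic shift `s_{r+1} ⋯ s_d s_1 ⋯ s_r` (`r ∈ {1, …, d}`) of some reduced
decomposition `w = s_1 ⋯ s_d` of `w`. -/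
def CyclicShift (cs : CoxeterSystem M W) (w w' : W) : Prop :=
  ∃ ω : List B, cs.wordProd ω = w ∧ cs.IsReduced ω ∧
    ∃ r, 1 ≤ r ∧ r ≤ ω.length ∧ w' = cs.wordProd (ω.drop r ++ ω.take r)

/-- `w` is straight if `ℓ(wⁿ) = n ℓ(w)` for all `n : ℕ`. -/
def IsStraight (cs : CoxeterSystem M W) (w : W) : Prop :=
  ∀ n : ℕ, cs.length (w ^ n) = n * cs.length w

namespace CoxeterSystem

variable (cs : CoxeterSystem M W)

local prefix:100 "s" => cs.simple
local prefix:100 "π" => cs.wordProd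
local prefix:100 "ℓ" => cs.length

open Classical in
noncomputable def titsPerm (i : B) : Equiv.Perm (W × ZMod 2) :=
  Function.Involutive.toPerm (fun p => (s i * p.1 * s i, p.2 + if p.1 = s i then 1 else 0))
    (by
      rintro ⟨t, ε⟩
      simp [cs.simple_mul_simple_cancel_left, mul_assoc, mul_eq_one_iff_eq_inv, add_assoc,
        CharTwo.add_self_eq_zero])

open Classical in
theorem titsPerm_apply (i : B) (t : W) (ε : ZMod 2) :
    cs.titsPerm i (t, ε) = (s i * t * s i, ε + if t = s i then 1 else 0) :=
  rfl

theorem simple_mul_simple_pow_inv_mul_simple (i j : B) (n : ℕ) :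
    ((s i * s j) ^ n)⁻¹ * s j = s j * (s i * s j) ^ n := by
  have h : s j * (s i * s j) * (s j)⁻¹ = (s i * s j)⁻¹ := by
    simp [mul_assoc, cs.simple_mul_simple_cancel_right]
  rw [← inv_pow, ← h, conj_pow, inv_simple, cs.simple_mul_simple_cancel_right]

open Classical in
theorem titsPerm_mul_pow_apply (i j : B) (n : ℕ) (t : W) (ε : ZMod 2) :
    ((cs.titsPerm i * cs.titsPerm j) ^ n) (t, ε) =
      ((s i * s j) ^ n * t * ((s i * s j) ^ n)⁻¹,
        ε + ∑ k ∈ Finset.range (2 * n), if t = s j * (s i * s j) ^ k then 1 else 0) := by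
  induction n with
  | zero => simp
  | succ n ih =>
    set x := s i * s j
    have hconj : ∀ g u : W, g * t * g⁻¹ = u ↔ t = g⁻¹ * u * g := fun g u => by
      rw [mul_inv_eq_iff_eq_mul, ← eq_inv_mul_iff_mul_eq, mul_assoc]
    have h₁ : x ^ n * t * (x ^ n)⁻¹ = s j ↔ t = s j * x ^ (2 * n) := by
      rw [hconj, simple_mul_simple_pow_inv_mul_simple, mul_assoc, ← pow_add, ← two_mul]
    have h₂ : s j * (x ^ n * t * (x ^ n)⁻¹) * s j = s i ↔ t = s j * x ^ (2 * n + 1) := by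
      have e₁ : s j * (x ^ n * t * (x ^ n)⁻¹) * s j = (s j * x ^ n) * t * (s j * x ^ n)⁻¹ := by
        simp [mul_assoc]
      have e₂ : (s j * x ^ n)⁻¹ * s i * (s j * x ^ n) = s j * x ^ (2 * n + 1) := by
        calc (s j * x ^ n)⁻¹ * s i * (s j * x ^ n) = (x ^ n)⁻¹ * s j * x * x ^ n := by
              simp [x, mul_assoc]
          _ = s j * x ^ (2 * n + 1) := by
              rw [simple_mul_simple_pow_inv_mul_simple, mul_assoc, mul_assoc, ← pow_succ', ← pow_add]
              congr 2; omega
      rw [e₁, hconj, e₂]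
    rw [pow_succ', Equiv.Perm.mul_apply, ih, Equiv.Perm.mul_apply, titsPerm_apply,
      titsPerm_apply, h₁, h₂, mul_add_one, Finset.sum_range_succ, Finset.sum_range_succ]
    refine Prod.ext ?_ (by simp only [add_assoc])
    simp [x, pow_succ', mul_assoc]

open Classical in
theorem isLiftable_titsPerm : M.IsLiftable cs.titsPerm := by
  intro i j
  have hm := cs.simple_mul_simple_pow i j
  generalize M i j = m at hm ⊢
  ext ⟨t, ε⟩ : 1
  -- the parity sum runs over two periods of an `m`-periodic sequence
  rw [titsPerm_mul_pow_apply, hm, two_mul, Finset.sum_range_add]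
  simp only [pow_add, hm, one_mul, inv_one, mul_one, CharTwo.add_self_eq_zero, add_zero,
    Equiv.Perm.one_apply]

noncomputable def titsRep : W →* Equiv.Perm (W × ZMod 2) :=
  cs.lift ⟨cs.titsPerm, cs.isLiftable_titsPerm⟩

theorem titsRep_simple (i : B) : cs.titsRep (s i) = cs.titsPerm i :=
  cs.lift_apply_simple cs.isLiftable_titsPerm i

/-- `η(w, t)`: the parity of the number of occurrences of `t` in `cs.rightInvSeq ω`, for any
word `ω` of `w`. -/
noncomputable def inversionParity (w t : W) : ZMod 2 := (cs.titsRep w (t, 0)).2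

open Classical in
theorem titsRep_apply (w t : W) (ε : ZMod 2) :
    cs.titsRep w (t, ε) = (w * t * w⁻¹, ε + cs.inversionParity w t) := by
  induction w using cs.simple_induction_left generalizing ε with
  | one => simp [inversionParity]
  | mul_simple_left w i ih =>
    have h : cs.inversionParity (s i * w) t =
        cs.inversionParity w t + if w * t * w⁻¹ = s i then 1 else 0 := by
      rw [inversionParity, map_mul, Equiv.Perm.mul_apply, ih, titsRep_simple, titsPerm_apply,
        zero_add]
    rw [map_mul, Equiv.Perm.mul_apply, ih, titsRep_simple, titsPerm_apply, h, mul_inv_rev,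
      inv_simple, add_assoc]
    simp only [mul_assoc]

theorem inversionParity_one (t : W) : cs.inversionParity 1 t = 0 := by
  simp [inversionParity]

open Classical in
theorem inversionParity_simple (i : B) (t : W) :
    cs.inversionParity (s i) t = if t = s i then 1 else 0 := by
  simp [inversionParity, titsRep_simple, titsPerm_apply]

theorem inversionParity_mul (u v t : W) :
    cs.inversionParity (u * v) t = cs.inversionParity v t + cs.inversionParity u (v * t * v⁻¹) := by
  rw [inversionParity, map_mul, Equiv.Perm.mul_apply, titsRep_apply, titsRep_apply, zero_add]

theorem inversionParity_inv_conj (u t : W) :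
    cs.inversionParity u⁻¹ (u * t * u⁻¹) = cs.inversionParity u t := by
  have h := cs.inversionParity_mul u⁻¹ u t
  rw [inv_mul_cancel, inversionParity_one, eq_comm, add_eq_zero_iff_eq_neg, CharTwo.neg_eq] at h
  exact h.symm

theorem IsReflection.inversionParity_self {t : W} (ht : cs.IsReflection t) :
    cs.inversionParity t t = 1 := by
  obtain ⟨u, i, rfl⟩ := ht
  have h₁ : u⁻¹ * (u * s i * u⁻¹) * u⁻¹⁻¹ = s i := by group
  have h₂ : s i * s i * (s i)⁻¹ = s i := by group
  rw [inversionParity_mul, inversionParity_inv_conj, h₁, inversionParity_mul, h₂,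
    inversionParity_simple, if_pos rfl, add_left_comm, CharTwo.add_self_eq_zero, add_zero]

theorem mem_rightInvSeq_of_inversionParity_eq_one {ω : List B} {t : W}
    (h : cs.inversionParity (π ω) t = 1) : t ∈ cs.rightInvSeq ω := by
  induction ω with
  | nil => simp [inversionParity_one] at h
  | cons i ω ih =>
    rw [wordProd_cons, inversionParity_mul, inversionParity_simple] at h
    rw [rightInvSeq, List.mem_cons]
    by_cases hc : π ω * t * (π ω)⁻¹ = s i
    · left
      rw [← hc]
      group
    · right
      exact ih (by simpa [hc] using h)

private theorem zmod_two_eq_one_iff (x : ZMod 2) : x = 1 ↔ x ≠ 0 := by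
  revert x
  decide

theorem inversionParity_eq_one_iff {w t : W} (ht : cs.IsReflection t) :
    cs.inversionParity w t = 1 ↔ cs.IsRightInversion w t := by
  have hsound : ∀ w, cs.inversionParity w t = 1 → cs.IsRightInversion w t := fun w h => by
    obtain ⟨ω, hω, rfl⟩ := cs.exists_isReduced w
    exact cs.isRightInversion_of_mem_rightInvSeq hω (cs.mem_rightInvSeq_of_inversionParity_eq_one h)
  refine ⟨hsound w, fun hw => ?_⟩
  have h := cs.inversionParity_mul (w * t) t t
  simp only [mul_assoc, ht.mul_self, mul_one, one_mul, ht.inv, ht.inversionParity_self] at h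
  have h₀ : cs.inversionParity (w * t) t = 0 := by
    by_contra hne
    exact ht.isRightInversion_mul_left_iff.mp
      (hsound _ ((zmod_two_eq_one_iff _).mpr hne)) hw
  rw [h, h₀, add_zero]

theorem inversionParity_eq_zero_iff {w t : W} (ht : cs.IsReflection t) :
    cs.inversionParity w t = 0 ↔ ¬cs.IsRightInversion w t := by
  rw [← inversionParity_eq_one_iff cs ht, zmod_two_eq_one_iff, not_not]

theorem inversionParity_simple_eq_zero_iff {w : W} {i : B} :
    cs.inversionParity w (s i) = 0 ↔ ℓ w < ℓ (w * s i) := by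
  rw [inversionParity_eq_zero_iff cs (cs.isReflection_simple i),
    isRightInversion_simple_iff_isRightDescent, not_isRightDescent_iff]
  have := cs.length_mul_simple w i
  omega

theorem mem_leftInvSeq_of_isLeftInversion {ω : List B} {t : W}
    (h : cs.IsLeftInversion (π ω) t) : t ∈ cs.leftInvSeq ω := by
  have hrev : cs.inversionParity (π ω.reverse) t = 1 := by
    rwa [inversionParity_eq_one_iff cs h.1, wordProd_reverse, isRightInversion_inv_iff]
  simpa [rightInvSeq_reverse] using cs.mem_rightInvSeq_of_inversionParity_eq_one hrev

theorem exists_eraseIdx_of_isLeftInversion {ω : List B} {t : W}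
    (h : cs.IsLeftInversion (π ω) t) : ∃ j < ω.length, t * π ω = π (ω.eraseIdx j) := by
  obtain ⟨j, hj, rfl⟩ := List.mem_iff_getElem.mp (cs.mem_leftInvSeq_of_isLeftInversion h)
  refine ⟨j, by simpa using hj, ?_⟩
  rw [← List.getD_eq_getElem _ 1 hj, getD_leftInvSeq_mul_wordProd]

theorem isLeftInversion_mul_iff {u n t : W} (ht : cs.IsReflection t)
    (hn : ¬cs.IsLeftInversion n (u⁻¹ * t * u)) :
    cs.IsLeftInversion (u * n) t ↔ cs.IsLeftInversion u t := by
  have ht' : cs.IsReflection (u⁻¹ * t * u) := by simpa using ht.conj u⁻¹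
  rw [← isRightInversion_inv_iff, ← isRightInversion_inv_iff, ← inversionParity_eq_one_iff cs ht,
    ← inversionParity_eq_one_iff cs ht, mul_inv_rev, inversionParity_mul, inv_inv,
    (inversionParity_eq_zero_iff cs ht').mpr (by rwa [isRightInversion_inv_iff]), add_zero]

theorem exists_reduced_sublist (ω : List B) :
    ∃ ω' : List B, ω'.Sublist ω ∧ cs.IsReduced ω' ∧ π ω' = π ω := by
  induction ω with
  | nil => exact ⟨[], .slnil, by simp [IsReduced], rfl⟩
  | cons i ω ih =>
    obtain ⟨ω', hsub, hred, hprod⟩ := ih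
    by_cases hdesc : cs.IsLeftDescent (π ω') i
    · obtain ⟨j, hj, hexch⟩ := cs.exists_eraseIdx_of_isLeftInversion
        ((isLeftInversion_simple_iff_isLeftDescent cs _ i).mpr hdesc)
      refine ⟨ω'.eraseIdx j, (List.eraseIdx_sublist ω' j).trans (hsub.cons i), ?_, ?_⟩
      · have h₁ := cs.isLeftDescent_iff.mp hdesc
        have h₂ := List.length_eraseIdx_add_one hj
        rw [IsReduced, ← hexch]
        rw [IsReduced] at hred
        omega
      · rw [← hexch, wordProd_cons, hprod]
    · refine ⟨i :: ω', hsub.cons_cons i, ?_, by rw [wordProd_cons, wordProd_cons, hprod]⟩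
      rw [IsReduced, wordProd_cons, cs.not_isLeftDescent_iff.mp hdesc, hred, List.length_cons]

theorem length_simple_mul_inv (w : W) (i : B) : ℓ (s i * w⁻¹) = ℓ (w * s i) := by
  rw [← length_inv, mul_inv_rev, inv_inv, inv_simple]

theorem length_inv_mul_simple (w : W) (i : B) : ℓ (w⁻¹ * s i) = ℓ (s i * w) := by
  simpa using (cs.length_simple_mul_inv w⁻¹ i).symm

section Parabolic

variable {cs} {I : Set B}

theorem simple_mem_standardParabolic {i : B} (hi : i ∈ I) : s i ∈ StandardParabolic cs I :=
  Subgroup.subset_closure ⟨i, hi, rfl⟩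

theorem mem_standardParabolic_iff {u : W} :
    u ∈ StandardParabolic cs I ↔ ∃ ω : List B, (∀ i ∈ ω, i ∈ I) ∧ cs.IsReduced ω ∧ π ω = u := by
  refine ⟨fun hu => ?_, ?_⟩
  · have hword : ∃ ω : List B, (∀ i ∈ ω, i ∈ I) ∧ π ω = u := by
      induction hu using Subgroup.closure_induction with
      | mem x hx =>
        obtain ⟨i, hi, rfl⟩ := hx
        exact ⟨[i], by simpa using hi, cs.wordProd_singleton i⟩
      | one => exact ⟨[], by simp, cs.wordProd_nil⟩
      | mul x y _ _ hx hy =>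
        obtain ⟨ω, hω, rfl⟩ := hx
        obtain ⟨ω', hω', rfl⟩ := hy
        refine ⟨ω ++ ω', fun i hi => ?_, cs.wordProd_append ω ω'⟩
        exact (List.mem_append.mp hi).elim (hω i) (hω' i)
      | inv x _ hx =>
        obtain ⟨ω, hω, rfl⟩ := hx
        exact ⟨ω.reverse, fun i hi => hω i (List.mem_reverse.mp hi), cs.wordProd_reverse ω⟩
    obtain ⟨ω, hω, rfl⟩ := hword
    obtain ⟨ω', hsub, hred, hprod⟩ := cs.exists_reduced_sublist ω
    exact ⟨ω', fun i hi => hω i (hsub.subset hi), hred, hprod⟩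
  · rintro ⟨ω, hω, -, rfl⟩
    refine list_prod_mem fun x hx => ?_
    obtain ⟨i, hi, rfl⟩ := List.mem_map.mp hx
    exact simple_mem_standardParabolic (hω i hi)

theorem exists_isLeftDescent_of_mem_standardParabolic {u : W} (hu : u ∈ StandardParabolic cs I)
    (h1 : u ≠ 1) : ∃ i ∈ I, cs.IsLeftDescent u i := by
  obtain ⟨_ | ⟨i, ω⟩, hI, hred, rfl⟩ := mem_standardParabolic_iff.mp hu
  · exact absurd cs.wordProd_nil h1
  · refine ⟨i, hI i List.mem_cons_self, ?_⟩
    rw [IsLeftDescent, hred, wordProd_cons, simple_mul_simple_cancel_left]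
    exact (cs.length_wordProd_le ω).trans_lt (by simp)

theorem exists_isRightDescent_of_mem_standardParabolic {u : W} (hu : u ∈ StandardParabolic cs I)
    (h1 : u ≠ 1) : ∃ i ∈ I, cs.IsRightDescent u i := by
  obtain ⟨i, hi, hdesc⟩ := exists_isLeftDescent_of_mem_standardParabolic (inv_mem hu)
    (inv_ne_one.mpr h1)
  exact ⟨i, hi, cs.isLeftDescent_inv_iff.mp hdesc⟩

theorem exists_eq_simple_of_length_eq_one {u : W} (hu : u ∈ StandardParabolic cs I)
    (h : ℓ u = 1) : ∃ i ∈ I, u = s i := by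
  obtain ⟨ω, hI, hred, rfl⟩ := mem_standardParabolic_iff.mp hu
  obtain ⟨i, rfl⟩ := List.length_eq_one_iff.mp (hred.symm.trans h)
  exact ⟨i, hI i (List.mem_singleton_self i), cs.wordProd_singleton i⟩

theorem length_mul_of_forall_not_isLeftInversion {n : W}
    (hn : ∀ t ∈ StandardParabolic cs I, ¬cs.IsLeftInversion n t) {u : W}
    (hu : u ∈ StandardParabolic cs I) : ℓ (u * n) = ℓ u + ℓ n := by
  have step : ∀ i ∈ I, ∀ u ∈ StandardParabolic cs I, ℓ (u * n) = ℓ u + ℓ n →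
      ℓ (s i * u * n) = ℓ (s i * u) + ℓ n := by
    intro i hi u hu ih
    have hconj : u⁻¹ * s i * u ∈ StandardParabolic cs I :=
      mul_mem (mul_mem (inv_mem hu) (simple_mem_standardParabolic hi)) hu
    have hdesc : cs.IsLeftDescent (u * n) i ↔ cs.IsLeftDescent u i := by
      simpa only [isLeftInversion_simple_iff_isLeftDescent] using
        cs.isLeftInversion_mul_iff (cs.isReflection_simple i) (hn _ hconj)
    rw [mul_assoc]
    by_cases h : cs.IsLeftDescent u i
    · have h₁ := cs.isLeftDescent_iff.mp h
      have h₂ := cs.isLeftDescent_iff.mp (hdesc.mpr h)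
      omega
    · have h₁ := cs.not_isLeftDescent_iff.mp h
      have h₂ := cs.not_isLeftDescent_iff.mp (hdesc.not.mpr h)
      omega
  induction hu using Subgroup.closure_induction_left with
  | one => simp
  | mul_left x hx u hu ih =>
    obtain ⟨i, hi, rfl⟩ := hx
    exact step i hi u hu ih
  | inv_mul_cancel x hx u hu ih =>
    obtain ⟨i, hi, rfl⟩ := hx
    simpa only [inv_simple] using step i hi u hu ih

variable (cs I) in
theorem exists_minimal_mul (g : W) :
    ∃ u ∈ StandardParabolic cs I, ∀ v ∈ StandardParabolic cs I, ℓ (u * g) ≤ ℓ (v * g) := by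
  obtain ⟨u, hu, hmin⟩ := (measure fun u => ℓ (u * g)).wf.has_min (StandardParabolic cs I : Set W)
    ⟨1, one_mem _⟩
  exact ⟨u, hu, fun v hv => not_lt.mp (hmin v hv)⟩

theorem length_mul_of_minimal {n : W} (hmin : ∀ v ∈ StandardParabolic cs I, ℓ n ≤ ℓ (v * n))
    {u : W} (hu : u ∈ StandardParabolic cs I) : ℓ (u * n) = ℓ u + ℓ n :=
  length_mul_of_forall_not_isLeftInversion (fun t ht hinv => (hmin t ht).not_gt hinv.2) hu

theorem length_mul_of_forall_lt_length_simple_mul {n : W} (hL : ∀ i ∈ I, ℓ n < ℓ (s i * n))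
    {u : W} (hu : u ∈ StandardParabolic cs I) : ℓ (u * n) = ℓ u + ℓ n := by
  obtain ⟨u₀, hu₀, hmin⟩ := exists_minimal_mul cs I n
  have hadd : ∀ v ∈ StandardParabolic cs I, ℓ (v * (u₀ * n)) = ℓ v + ℓ (u₀ * n) :=
    fun v hv => length_mul_of_minimal (fun w hw => by
      rw [← mul_assoc]; exact hmin _ (mul_mem hw hu₀)) hv
  -- otherwise a left descent of `u₀⁻¹` in `I` would shorten `n = u₀⁻¹ * (u₀ * n)`
  obtain rfl : u₀ = 1 := by
    by_contra h1
    obtain ⟨i, hi, hdesc⟩ := exists_isLeftDescent_of_mem_standardParabolic (inv_mem hu₀)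
      (inv_ne_one.mpr h1)
    have e₁ := hadd _ (mul_mem (simple_mem_standardParabolic hi) (inv_mem hu₀))
    have e₂ := hadd _ (inv_mem hu₀)
    simp only [mul_assoc, inv_mul_cancel_left] at e₁ e₂
    have := hL i hi
    rw [IsLeftDescent] at hdesc
    omega
  simpa using hadd u hu

theorem length_mul_of_forall_lt_length_mul_simple {n : W} (hR : ∀ i ∈ I, ℓ n < ℓ (n * s i))
    {u : W} (hu : u ∈ StandardParabolic cs I) : ℓ (n * u) = ℓ n + ℓ u := by
  have hL : ∀ i ∈ I, ℓ n⁻¹ < ℓ (s i * n⁻¹) := fun i hi => by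
    rw [length_inv, length_simple_mul_inv]
    exact hR i hi
  rw [← length_inv, mul_inv_rev, length_mul_of_forall_lt_length_simple_mul hL (inv_mem hu),
    length_inv, length_inv, add_comm]

end Parabolic

section Normalizer

variable {cs} {I : Set B}

theorem forall_lt_length_simple_mul_of_mem_normalizer {n : W}
    (hn : n ∈ Subgroup.normalizer (StandardParabolic cs I : Set W))
    (hR : ∀ i ∈ I, ℓ n < ℓ (n * s i)) : ∀ i ∈ I, ℓ n < ℓ (s i * n) := by
  intro i hi
  have hconj : n⁻¹ * s i * n ∈ StandardParabolic cs I :=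
    (Subgroup.mem_normalizer_iff''.mp hn _).mp (simple_mem_standardParabolic hi)
  have hpos : 0 < ℓ (n⁻¹ * s i * n) := by
    simpa using ((cs.isReflection_simple i).conj n⁻¹).odd_length.pos
  calc ℓ n < ℓ n + ℓ (n⁻¹ * s i * n) := by omega
    _ = ℓ (n * (n⁻¹ * s i * n)) := (length_mul_of_forall_lt_length_mul_simple hR hconj).symm
    _ = ℓ (s i * n) := by group

theorem forall_lt_length_simple_mul_iff_of_mem_normalizer {n : W}
    (hn : n ∈ Subgroup.normalizer (StandardParabolic cs I : Set W)) :
    (∀ i ∈ I, ℓ n < ℓ (s i * n)) ↔ ∀ i ∈ I, ℓ n < ℓ (n * s i) := by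
  refine ⟨fun hL i hi => ?_, forall_lt_length_simple_mul_of_mem_normalizer hn⟩
  have hR' : ∀ i ∈ I, ℓ n⁻¹ < ℓ (n⁻¹ * s i) := fun i hi => by
    simpa [length_inv_mul_simple] using hL i hi
  simpa [length_simple_mul_inv] using
    forall_lt_length_simple_mul_of_mem_normalizer (inv_mem hn) hR' i hi

theorem exists_mul_simple_mul_inv_eq_simple {n : W}
    (hn : n ∈ Subgroup.normalizer (StandardParabolic cs I : Set W))
    (hR : ∀ i ∈ I, ℓ n < ℓ (n * s i)) {i : B} (hi : i ∈ I) : ∃ j ∈ I, n * s i * n⁻¹ = s j := by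
  have hconj : n * s i * n⁻¹ ∈ StandardParabolic cs I :=
    (Subgroup.mem_normalizer_iff.mp hn _).mp (simple_mem_standardParabolic hi)
  have hadd := length_mul_of_forall_lt_length_simple_mul
    ((forall_lt_length_simple_mul_iff_of_mem_normalizer hn).mpr hR) hconj
  rw [inv_mul_cancel_right] at hadd
  have := hR i hi
  have := cs.length_mul_simple n i
  exact exists_eq_simple_of_length_eq_one hconj (by omega)

variable (cs I) in
/-- The subgroup `N_I`. -/
def normalizerComplement : Subgroup W where
  carrier := {n | n ∈ Subgroup.normalizer (StandardParabolic cs I : Set W) ∧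
    ∀ i ∈ I, ℓ n < ℓ (n * s i)}
  one_mem' := ⟨one_mem _, fun i _ => by simp [length_simple]⟩
  mul_mem' := by
    rintro a b ⟨ha, haR⟩ ⟨hb, hbR⟩
    refine ⟨mul_mem ha hb, fun i hi => ?_⟩
    obtain ⟨j, hj, hbj⟩ := exists_mul_simple_mul_inv_eq_simple hb hbR hi
    rw [← inversionParity_simple_eq_zero_iff, inversionParity_mul, hbj,
      (cs.inversionParity_simple_eq_zero_iff).mpr (hbR i hi),
      (cs.inversionParity_simple_eq_zero_iff).mpr (haR j hj), add_zero]
  inv_mem' := by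
    rintro n ⟨hn, hR⟩
    refine ⟨inv_mem hn, fun i hi => ?_⟩
    simpa [length_inv_mul_simple] using
      (forall_lt_length_simple_mul_iff_of_mem_normalizer hn).mpr hR i hi

theorem exists_mul_mem_normalizerComplement {g : W}
    (hg : g ∈ Subgroup.normalizer (StandardParabolic cs I : Set W)) :
    ∃ w ∈ StandardParabolic cs I, ∃ n ∈ normalizerComplement cs I, g = w * n := by
  obtain ⟨u, hu, hmin⟩ := exists_minimal_mul cs I g
  have hn : u * g ∈ Subgroup.normalizer (StandardParabolic cs I : Set W) :=
    mul_mem (Subgroup.le_normalizer hu) hg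
  have hL : ∀ i ∈ I, ℓ (u * g) < ℓ (s i * (u * g)) := fun i hi => by
    have h := hmin _ (mul_mem (simple_mem_standardParabolic hi) hu)
    rw [mul_assoc] at h
    exact h.lt_of_ne (cs.length_simple_mul_ne _ i).symm
  refine ⟨u⁻¹, inv_mem hu, u * g,
    ⟨hn, (forall_lt_length_simple_mul_iff_of_mem_normalizer hn).mp hL⟩, by group⟩

theorem disjoint_standardParabolic_normalizerComplement :
    Disjoint (StandardParabolic cs I) (normalizerComplement cs I) := by
  refine Subgroup.disjoint_def.mpr fun {g} hg ⟨_, hR⟩ => ?_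
  by_contra h1
  obtain ⟨i, hi, hdesc⟩ := exists_isRightDescent_of_mem_standardParabolic hg h1
  exact lt_asymm hdesc (hR i hi)

theorem length_mul_of_mem_normalizerComplement {w n : W} (hw : w ∈ StandardParabolic cs I)
    (hn : n ∈ normalizerComplement cs I) : ℓ (w * n) = ℓ w + ℓ n :=
  length_mul_of_forall_lt_length_simple_mul
    ((forall_lt_length_simple_mul_iff_of_mem_normalizer hn.1).mpr hn.2) hw

end Normalizer

end CoxeterSystem

/-- `N_W(W_I) = W_I ⋊ N_I`, where `N_I` is the set of minimal length coset representatives,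
together with the length additivity `ℓ(w_I n_I) = ℓ(w_I) + ℓ(n_I)`. -/
theorem normalizer_semidirect_product (cs : CoxeterSystem M W) (I : Set B) :
    (1 : W) ∈ {n : W | n ∈ Subgroup.normalizer (StandardParabolic cs I : Set W) ∧
        ∀ i ∈ I, cs.length n < cs.length (n * cs.simple i)} ∧
    (∀ a ∈ {n : W | n ∈ Subgroup.normalizer (StandardParabolic cs I : Set W) ∧
        ∀ i ∈ I, cs.length n < cs.length (n * cs.simple i)},
      ∀ b ∈ {n : W | n ∈ Subgroup.normalizer (StandardParabolic cs I : Set W) ∧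
        ∀ i ∈ I, cs.length n < cs.length (n * cs.simple i)},
      a * b ∈ {n : W | n ∈ Subgroup.normalizer (StandardParabolic cs I : Set W) ∧
        ∀ i ∈ I, cs.length n < cs.length (n * cs.simple i)}) ∧
    (∀ a ∈ {n : W | n ∈ Subgroup.normalizer (StandardParabolic cs I : Set W) ∧
        ∀ i ∈ I, cs.length n < cs.length (n * cs.simple i)},
      a⁻¹ ∈ {n : W | n ∈ Subgroup.normalizer (StandardParabolic cs I : Set W) ∧
        ∀ i ∈ I, cs.length n < cs.length (n * cs.simple i)}) ∧
    (∀ g ∈ Subgroup.normalizer (StandardParabolic cs I : Set W), ∃ wI ∈ StandardParabolic cs I,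
      ∃ nI ∈ {n : W | n ∈ Subgroup.normalizer (StandardParabolic cs I : Set W) ∧
        ∀ i ∈ I, cs.length n < cs.length (n * cs.simple i)}, g = wI * nI) ∧
    (∀ g ∈ StandardParabolic cs I,
      g ∈ {n : W | n ∈ Subgroup.normalizer (StandardParabolic cs I : Set W) ∧
        ∀ i ∈ I, cs.length n < cs.length (n * cs.simple i)} → g = 1) ∧
    (∀ g ∈ Subgroup.normalizer (StandardParabolic cs I : Set W), ∀ p ∈ StandardParabolic cs I,
      g⁻¹ * p * g ∈ StandardParabolic cs I) ∧
    (∀ wI ∈ StandardParabolic cs I,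
      ∀ nI ∈ {n : W | n ∈ Subgroup.normalizer (StandardParabolic cs I : Set W) ∧
        ∀ i ∈ I, cs.length n < cs.length (n * cs.simple i)},
      cs.length (wI * nI) = cs.length wI + cs.length nI) :=
  ⟨(normalizerComplement cs I).one_mem,
    fun _ ha _ hb => (normalizerComplement cs I).mul_mem ha hb,
    fun _ ha => (normalizerComplement cs I).inv_mem ha,
    fun _ hg => exists_mul_mem_normalizerComplement hg,
    fun _ hg hn => Subgroup.disjoint_def.mp disjoint_standardParabolic_normalizerComplement hg hn,
    fun _ hg p hp => (Subgroup.mem_normalizer_iff''.mp hg p).mp hp,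
    fun _ hw _ hn => length_mul_of_mem_normalizerComplement hw hn⟩
end

section
/- Let (W,S) be a Coxeter system and let w ∈ W be straight. Then w is of minimal length in its conjugacy class. Moreover, if w normalises W_I for some spherical subset I ⊆ S, then ℓ(ws) > ℓ(w) for all s ∈ I (that is, w belongs to N_I, the set of minimal length coset representatives in N_W(W_I)). -/
open CoxeterSystem

variable {B W : Type*} [Group W] {M : CoxeterMatrix B}

/-! If `ℓ(wⁿ) = n ℓ(w)` and `wⁿ = x uⁿ y` with `ℓ(x) + ℓ(y) ≤ C` for every `n`, then
`n ℓ(w) ≤ n ℓ(u) + C` for every `n`, whence `ℓ(w) ≤ ℓ(u)`. Conjugates `u = v⁻¹ w v` are of this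
form with `x = v`, `y = v⁻¹`. If `w` normalises a finite subgroup `H ∋ h`, then `wⁿ = (w h)ⁿ t`
with `t ∈ H`, so `ℓ(w) ≤ ℓ(w h)`; for `h = sᵢ`, `i ∈ I`, parity makes this inequality strict. -/

namespace CoxeterSystem

variable (cs : CoxeterSystem M W)

theorem length_pow_le (w : W) (n : ℕ) : cs.length (w ^ n) ≤ n * cs.length w := by
  induction n with
  | zero => simp
  | succ n ih =>
    calc cs.length (w ^ (n + 1)) ≤ cs.length (w ^ n) + cs.length w := by
          rw [pow_succ]; exact cs.length_mul_le _ _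
      _ ≤ (n + 1) * cs.length w := by rw [add_mul, one_mul]; omega

theorem length_mul_mul_le (x u y : W) :
    cs.length (x * u * y) ≤ cs.length x + cs.length u + cs.length y :=
  (cs.length_mul_le _ _).trans (Nat.add_le_add_right (cs.length_mul_le _ _) _)

end CoxeterSystem

theorem Subgroup.exists_mem_pow_mul_eq_pow_mul {G : Type*} [Group G] {H : Subgroup G} {g h : G}
    (hg : g ∈ normalizer (H : Set G)) (hh : h ∈ H) (n : ℕ) :
    ∃ t ∈ H, (g * h) ^ n = g ^ n * t := by
  induction n with
  | zero => exact ⟨1, H.one_mem, by simp⟩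
  | succ n ih =>
    obtain ⟨t, ht, hpow⟩ := ih
    have hconj : g⁻¹ * t * g ∈ H := (mem_normalizer_iff''.mp hg t).mp ht
    refine ⟨g⁻¹ * t * g * h, H.mul_mem hconj hh, ?_⟩
    rw [pow_succ, hpow, pow_succ]
    group

namespace IsStraight

variable {cs : CoxeterSystem M W} {w : W}

theorem length_le_of_pow_eq_mul_pow_mul (hw : IsStraight cs w) {u : W} (C : ℕ)
    (h : ∀ n : ℕ, ∃ x y : W, w ^ n = x * u ^ n * y ∧ cs.length x + cs.length y ≤ C) :
    cs.length w ≤ cs.length u := by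
  obtain ⟨x, y, hpow, hC⟩ := h (C + 1)
  have : (C + 1) * cs.length w ≤ (C + 1) * cs.length u + C :=
    calc (C + 1) * cs.length w = cs.length (w ^ (C + 1)) := (hw _).symm
      _ ≤ cs.length x + cs.length (u ^ (C + 1)) + cs.length y := by
          rw [hpow]; exact cs.length_mul_mul_le _ _ _
      _ ≤ (C + 1) * cs.length u + C := by have := cs.length_pow_le u (C + 1); omega
  nlinarith

theorem isMinimalLength (hw : IsStraight cs w) : IsMinimalLength cs w := fun v =>
  length_le_of_pow_eq_mul_pow_mul hw (2 * cs.length v) fun n => by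
    refine ⟨v, v⁻¹, ?_, by rw [cs.length_inv]; omega⟩
    have hconj := conj_pow (a := v⁻¹) (b := w) (i := n)
    rw [inv_inv] at hconj
    rw [hconj]
    group

theorem length_le_length_mul_of_mem_normalizer (hw : IsStraight cs w) {H : Subgroup W}
    (hH : (H : Set W).Finite) (hwH : w ∈ Subgroup.normalizer (H : Set W)) {h : W} (hh : h ∈ H) :
    cs.length w ≤ cs.length (w * h) := by
  obtain ⟨C, hC⟩ := (hH.image cs.length).bddAbove
  have hw' : w * h ∈ Subgroup.normalizer (H : Set W) :=
    Subgroup.mul_mem _ hwH (H.le_normalizer hh)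
  refine length_le_of_pow_eq_mul_pow_mul hw C fun n => ?_
  obtain ⟨t, ht, hpow⟩ := Subgroup.exists_mem_pow_mul_eq_pow_mul hw' (H.inv_mem hh) n
  exact ⟨1, t, by simpa using hpow, by simpa using hC ⟨t, ht, rfl⟩⟩

end IsStraight

/-- A straight element has minimal length in its conjugacy class; moreover, if it normalises
a finite standard parabolic `W_I`, then it is the minimal length representative of its coset,
i.e. `ℓ(ws) > ℓ(w)` for all `s ∈ I`. -/
theorem straight_min_length_and_mem_NI (cs : CoxeterSystem M W) (w : W)
    (hw : IsStraight cs w) :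
    IsMinimalLength cs w ∧
      ∀ I : Set B, IsSpherical cs I → w ∈ Subgroup.normalizer (StandardParabolic cs I : Set W) →
        ∀ i ∈ I, cs.length w < cs.length (w * cs.simple i) := by
  refine ⟨IsStraight.isMinimalLength hw, fun I hI hwI i hi => ?_⟩
  have hle := IsStraight.length_le_length_mul_of_mem_normalizer hw hI hwI
    (Subgroup.subset_closure ⟨i, hi, rfl⟩ : cs.simple i ∈ StandardParabolic cs I)
  rcases cs.length_mul_simple w i with _ | _ <;> omega
end
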